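/- There is no unit vector ψ ∈ ℂ⁵ that is simultaneously unbiased with respect to the eigenbases of the spin-2 operators J_x, J_y and J_z; i.e., no perfect quantum protractor exists for a spin-2 system. -/

import Mathlib

open Complex Real BigOperators Matrix

noncomputable section

def J2x : Matrix (Fin 5) (Fin 5) ℂ :=
  !![0, 1, 0, 0, 0;
     1, 0, (Real.sqrt (3/2) : ℂ), 0, 0;
     0, (Real.sqrt (3/2) : ℂ), 0, (Real.sqrt (3/2) : ℂ), 0;
     0, 0, (Real.sqrt (3/2) : ℂ), 0, 1;
     0, 0, 0, 1, 0]
def J2y : Matrix (Fin 5) (Fin 5) ℂ :=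
  Complex.I • !![0, -1, 0, 0, 0;
                 1, 0, -(Real.sqrt (3/2) : ℂ), 0, 0;
                 0, (Real.sqrt (3/2) : ℂ), 0, -(Real.sqrt (3/2) : ℂ), 0;
                 0, 0, (Real.sqrt (3/2) : ℂ), 0, -1;
                 0, 0, 0, 1, 0]
def J2z : Matrix (Fin 5) (Fin 5) ℂ :=
  !![2, 0, 0, 0, 0; 0, 1, 0, 0, 0; 0, 0, 0, 0, 0; 0, 0, 0, -1, 0; 0, 0, 0, 0, -2]

/-!
All five components of `ψ` have modulus `1/√5`. Pairing the `J_x`-eigenvectors for the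
eigenvalues `m` and `-m` (and the kernels of `J_x` and `J_y`), the parallelogram law turns
unbiasedness into orthogonality relations in `ℂ ≅ ℝ²`: `ψ₀ ⟂ ψ₄` and `ψ₁ ⟂ ψ₃`, so `ψ₄ = ±iψ₀`
and `ψ₃ = ±iψ₁`, and then `ψ₀ + ψ₄`, `ψ₁ + ψ₃` and `ψ₂` are three nonzero, pairwise orthogonal
vectors of the real plane.
-/

open scoped InnerProductSpace

theorem real_inner_eq_zero_and_norm_sq_add_of_norm_add_sq_eq_norm_sub_sq {E : Type*}
    [NormedAddCommGroup E] [InnerProductSpace ℝ E] {x y : E} {r : ℝ} (hadd : ‖x + y‖ ^ 2 = r)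
    (hsub : ‖x - y‖ ^ 2 = r) : ⟪x, y⟫_ℝ = 0 ∧ ‖x‖ ^ 2 + ‖y‖ ^ 2 = r := by
  rw [norm_add_sq_real] at hadd
  rw [norm_sub_sq_real] at hsub
  constructor <;> linarith

theorem three_le_finrank_of_inner_eq_zero {𝕜 E : Type*} [RCLike 𝕜] [NormedAddCommGroup E]
    [InnerProductSpace 𝕜 E] [FiniteDimensional 𝕜 E] {u v w : E} (hu : u ≠ 0) (hv : v ≠ 0)
    (hw : w ≠ 0) (huv : ⟪u, v⟫_𝕜 = 0) (huw : ⟪u, w⟫_𝕜 = 0) (hvw : ⟪v, w⟫_𝕜 = 0) :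
    3 ≤ Module.finrank 𝕜 E := by
  have hli : LinearIndependent 𝕜 ![u, v, w] := by
    refine linearIndependent_of_ne_zero_of_inner_eq_zero (fun i ↦ ?_) (fun i j hij ↦ ?_)
    · fin_cases i <;> assumption
    · fin_cases i <;> fin_cases j <;> simp_all [inner_eq_zero_symm]
  simpa using hli.fintype_card_le_finrank

namespace Complex

theorem eq_I_mul_or_eq_neg_I_mul_of_norm_eq_of_real_inner_eq_zero {z w : ℂ} (h : ‖z‖ = ‖w‖)
    (hzw : ⟪z, w⟫_ℝ = 0) : w = I * z ∨ w = -(I * z) := by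
  have key : ‖w ^ 2 + z ^ 2‖ ^ 2 = (‖w‖ ^ 2 - ‖z‖ ^ 2) ^ 2 + 4 * ⟪z, w⟫_ℝ ^ 2 := by
    simp only [Complex.sq_norm]
    simp only [Complex.inner, normSq_apply, pow_two, add_re, add_im, mul_re, mul_im, conj_re,
      conj_im]
    ring
  rw [h, sub_self, hzw] at key
  have hsq : w ^ 2 + z ^ 2 = 0 := by simpa using key
  have : (w - I * z) * (w + I * z) = 0 := by linear_combination hsq - z ^ 2 * I_sq
  rcases mul_eq_zero.mp this with h | h
  · exact Or.inl (sub_eq_zero.mp h)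
  · exact Or.inr (eq_neg_of_add_eq_zero_left h)

theorem real_inner_add_add_eq_zero_of_real_inner_sub_sub_eq_zero {z w z' w' : ℂ}
    (h : ‖z‖ = ‖w‖) (hzw : ⟪z, w⟫_ℝ = 0) (h' : ‖z'‖ = ‖w'‖) (hzw' : ⟪z', w'⟫_ℝ = 0)
    (hsub : ⟪z - w, z' - w'⟫_ℝ = 0) : ⟪z + w, z' + w'⟫_ℝ = 0 := by
  rcases eq_I_mul_or_eq_neg_I_mul_of_norm_eq_of_real_inner_eq_zero h hzw with rfl | rfl <;>
  rcases eq_I_mul_or_eq_neg_I_mul_of_norm_eq_of_real_inner_eq_zero h' hzw' with rfl | rfl <;>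
  simp only [Complex.inner, map_add, map_sub, map_neg, map_mul, conj_I, add_re, sub_re, neg_re,
    mul_re, I_re, I_im, conj_re, conj_im, mul_im, add_im, sub_im, neg_im] at hsub ⊢ <;>
  first | linear_combination hsub | linear_combination -hsub

end Complex

def IsUnbiasedFor {n : Type*} [Fintype n] (A : Matrix n n ℂ) (ψ : n → ℂ) : Prop :=
  ∀ (t : ℂ) (v : n → ℂ), A *ᵥ v = t • v → ∑ i, ‖v i‖ ^ 2 = 1 →
    ‖∑ i, star (v i) * ψ i‖ ^ 2 = 1 / Fintype.card n

namespace IsUnbiasedFor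

section

variable {n : Type*} [Fintype n] {A : Matrix n n ℂ} {ψ : n → ℂ}

theorem norm_sq_apply [DecidableEq n] {d : n → ℂ} (h : IsUnbiasedFor (diagonal d) ψ) (k : n) :
    ‖ψ k‖ ^ 2 = 1 / Fintype.card n := by
  have hk := h (d k) (Pi.single k 1)
    (by rw [diagonal_mulVec_single, ← Pi.single_smul, smul_eq_mul])
    (by simp [Pi.single_apply, apply_ite])
  simpa [Pi.single_apply] using hk

theorem norm_sq_eq_of_real_eigenvector (h : IsUnbiasedFor A ψ) {t : ℂ} (r : n → ℝ) {x : ℂ}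
    (hr : A *ᵥ (ofReal ∘ r) = t • (ofReal ∘ r)) (hn : ∑ i, r i ^ 2 = 1)
    (hx : ∑ i, r i • ψ i = x) : ‖x‖ ^ 2 = 1 / Fintype.card n := by
  subst hx
  simpa [Complex.real_smul, Complex.star_def, sq_abs] using h t _ hr (by simpa [sq_abs] using hn)

end

section

variable {ψ : Fin 5 → ℂ}

theorem J2x_J2y_kernel_overlaps (hx : IsUnbiasedFor J2x ψ) (hy : IsUnbiasedFor J2y ψ) :
    ⟪ψ 0 + ψ 4, ψ 2⟫_ℝ = 0 ∧ 3 / 2 * ‖ψ 0 + ψ 4‖ ^ 2 + ‖ψ 2‖ ^ 2 = 4 / 5 := by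
  have hy0 := hy.norm_sq_eq_of_real_eigenvector (t := 0) ![√(3/2) / 2, 0, 1/2, 0, √(3/2) / 2]
    (x := (1/2 : ℝ) • (√(3/2) • (ψ 0 + ψ 4) + ψ 2))
    -- keep `√(3/2)` atomic: `simp` would otherwise rewrite it to `√3 / √2`
    (by ext i; fin_cases i <;>
      simp [-Real.sqrt_div, -Real.sqrt_div', J2y, mulVec, dotProduct, Fin.sum_univ_five] <;> ring)
    (by simp [Fin.sum_univ_five, div_pow]; norm_num)
    (by simp only [Fin.sum_univ_five, Matrix.cons_val]; module)
  have hx0 := hx.norm_sq_eq_of_real_eigenvector (t := 0) ![√(3/2) / 2, 0, -1/2, 0, √(3/2) / 2]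
    (x := (1/2 : ℝ) • (√(3/2) • (ψ 0 + ψ 4) - ψ 2))
    (by ext i; fin_cases i <;>
      simp [-Real.sqrt_div, -Real.sqrt_div', J2x, mulVec, dotProduct, Fin.sum_univ_five] <;> ring)
    (by simp [Fin.sum_univ_five, div_pow]; norm_num)
    (by simp only [Fin.sum_univ_five, Matrix.cons_val]; module)
  rw [norm_smul, mul_pow] at hx0 hy0
  obtain ⟨h1, h2⟩ := real_inner_eq_zero_and_norm_sq_add_of_norm_add_sq_eq_norm_sub_sq
    (x := √(3/2) • (ψ 0 + ψ 4)) (y := ψ 2) (r := 4/5)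
    (by norm_num at hy0 ⊢; linarith) (by norm_num at hx0 ⊢; linarith)
  rw [real_inner_smul_left] at h1
  rw [norm_smul, mul_pow, Real.norm_eq_abs, sq_abs, sq_sqrt (by norm_num)] at h2
  exact ⟨(mul_eq_zero.mp h1).resolve_left (by positivity), h2⟩

theorem J2x_eigen_one_overlaps (hx : IsUnbiasedFor J2x ψ) :
    ⟪ψ 0 - ψ 4, ψ 1 - ψ 3⟫_ℝ = 0 ∧ ‖ψ 0 - ψ 4‖ ^ 2 + ‖ψ 1 - ψ 3‖ ^ 2 = 4 / 5 := by
  have hp := hx.norm_sq_eq_of_real_eigenvector (t := 1) ![1/2, 1/2, 0, -1/2, -1/2]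
    (x := (1/2 : ℝ) • ((ψ 0 - ψ 4) + (ψ 1 - ψ 3)))
    (by ext i; fin_cases i <;> simp [J2x, mulVec, dotProduct, Fin.sum_univ_five]; ring)
    (by simp [Fin.sum_univ_five]; norm_num)
    (by simp only [Fin.sum_univ_five, Matrix.cons_val]; module)
  have hm := hx.norm_sq_eq_of_real_eigenvector (t := -1) ![1/2, -1/2, 0, 1/2, -1/2]
    (x := (1/2 : ℝ) • ((ψ 0 - ψ 4) - (ψ 1 - ψ 3)))
    (by ext i; fin_cases i <;> simp [J2x, mulVec, dotProduct, Fin.sum_univ_five] <;> ring)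
    (by simp [Fin.sum_univ_five]; norm_num)
    (by simp only [Fin.sum_univ_five, Matrix.cons_val]; module)
  rw [norm_smul, mul_pow] at hp hm
  exact real_inner_eq_zero_and_norm_sq_add_of_norm_add_sq_eq_norm_sub_sq
    (x := ψ 0 - ψ 4) (y := ψ 1 - ψ 3)
    (by norm_num at hp ⊢; linarith) (by norm_num at hm ⊢; linarith)

theorem J2x_eigen_two_overlaps (hx : IsUnbiasedFor J2x ψ) :
    ⟪ψ 0 + ψ 4 + (2 * √(3/2)) • ψ 2, ψ 1 + ψ 3⟫_ℝ = 0 := by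
  have ha : ((√(3/2) : ℝ) : ℂ) ^ 2 = 3 / 2 := by
    rw [← ofReal_pow, sq_sqrt (by norm_num)]; norm_num
  have hp := hx.norm_sq_eq_of_real_eigenvector (t := 2) ![1/4, 1/2, √(3/2) / 2, 1/2, 1/4]
    (x := (1/4 : ℝ) • ((ψ 0 + ψ 4 + (2 * √(3/2)) • ψ 2) + (2 : ℝ) • (ψ 1 + ψ 3)))
    (by ext i; fin_cases i <;>
      simp [-Real.sqrt_div, -Real.sqrt_div', J2x, mulVec, dotProduct, Fin.sum_univ_five] <;>
      first | ring1 | linear_combination (1/2) * ha)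
    (by simp [Fin.sum_univ_five, div_pow]; norm_num)
    (by simp only [Fin.sum_univ_five, Matrix.cons_val]; module)
  have hm := hx.norm_sq_eq_of_real_eigenvector (t := -2) ![1/4, -1/2, √(3/2) / 2, -1/2, 1/4]
    (x := (1/4 : ℝ) • ((ψ 0 + ψ 4 + (2 * √(3/2)) • ψ 2) - (2 : ℝ) • (ψ 1 + ψ 3)))
    (by ext i; fin_cases i <;>
      simp [-Real.sqrt_div, -Real.sqrt_div', J2x, mulVec, dotProduct, Fin.sum_univ_five] <;>
      first | ring1 | linear_combination (1/2) * ha)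
    (by simp [Fin.sum_univ_five, div_pow]; norm_num)
    (by simp only [Fin.sum_univ_five, Matrix.cons_val]; module)
  rw [norm_smul, mul_pow] at hp hm
  have h := (real_inner_eq_zero_and_norm_sq_add_of_norm_add_sq_eq_norm_sub_sq
    (x := ψ 0 + ψ 4 + (2 * √(3/2)) • ψ 2) (y := (2 : ℝ) • (ψ 1 + ψ 3)) (r := 16 / 5)
    (by norm_num at hp ⊢; linarith) (by norm_num at hm ⊢; linarith)).1
  rw [real_inner_smul_right] at h
  exact (mul_eq_zero.mp h).resolve_left two_ne_zero

end

end IsUnbiasedFor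

theorem false_of_spin_two_overlap_relations (c : Fin 5 → ℂ) {b : ℝ} (hb : b ≠ 0)
    (hc : ∀ k, ‖c k‖ ^ 2 = 1 / 5)
    (h₀ : ⟪c 0 + c 4, c 2⟫_ℝ = 0 ∧ 3 / 2 * ‖c 0 + c 4‖ ^ 2 + ‖c 2‖ ^ 2 = 4 / 5)
    (h₁ : ⟪c 0 - c 4, c 1 - c 3⟫_ℝ = 0 ∧ ‖c 0 - c 4‖ ^ 2 + ‖c 1 - c 3‖ ^ 2 = 4 / 5)
    (h₂ : ⟪c 0 + c 4 + b • c 2, c 1 + c 3⟫_ℝ = 0) : False := by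
  obtain ⟨h02, hu⟩ := h₀
  obtain ⟨h13', hn⟩ := h₁
  replace hu : ‖c 0 + c 4‖ ^ 2 = 2 / 5 := by linarith [hc 2]
  have hnorm : ∀ i j, ‖c i‖ = ‖c j‖ := fun i j ↦
    (sq_eq_sq₀ (norm_nonneg _) (norm_nonneg _)).mp (by rw [hc, hc])
  have h04 : ⟪c 0, c 4⟫_ℝ = 0 := by
    have := norm_add_sq_real (c 0) (c 4)
    linarith [hc 0, hc 4]
  have h13 : ⟪c 1, c 3⟫_ℝ = 0 := by
    have := norm_sub_sq_real (c 0) (c 4)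
    have := norm_sub_sq_real (c 1) (c 3)
    linarith [hc 0, hc 1, hc 3, hc 4]
  have huv : ⟪c 0 + c 4, c 1 + c 3⟫_ℝ = 0 :=
    Complex.real_inner_add_add_eq_zero_of_real_inner_sub_sub_eq_zero (hnorm 0 4) h04 (hnorm 1 3)
      h13 h13'
  have h2v : ⟪c 2, c 1 + c 3⟫_ℝ = 0 := by
    rw [inner_add_left, huv, real_inner_smul_left, zero_add] at h₂
    exact (mul_eq_zero.mp h₂).resolve_left hb
  have hv : ‖c 1 + c 3‖ ^ 2 = 2 / 5 := by
    rw [norm_add_sq_real, h13, hc, hc]; norm_num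
  have hdim := three_le_finrank_of_inner_eq_zero (𝕜 := ℝ)
    (u := c 0 + c 4) (v := c 2) (w := c 1 + c 3)
    (by rintro h; norm_num [h] at hu) (by rintro h; simpa [h] using hc 2)
    (by rintro h; norm_num [h] at hv) h02 huv h2v
  rw [finrank_real_complex] at hdim
  norm_num at hdim

theorem J2z_eq_diagonal : J2z = diagonal ![2, 1, 0, -1, -2] := by
  ext i j; fin_cases i <;> fin_cases j <;> simp [J2z]

/-- There is no unit vector `ψ ∈ ℂ⁵` that is simultaneously unbiased with respect to the
eigenbases of the spin-2 operators `J_x, J_y, J_z`: no perfect quantum protractor exists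
for a spin-2 system. -/
theorem no_perfect_protractor_spin_two :
    ¬ ∃ ψ : Fin 5 → ℂ, (∑ i, ‖ψ i‖ ^ 2 = 1) ∧
      ∀ A ∈ ({J2x, J2y, J2z} : Set (Matrix (Fin 5) (Fin 5) ℂ)),
        ∀ (t : ℂ) (v : Fin 5 → ℂ), A.mulVec v = t • v → (∑ i, ‖v i‖ ^ 2 = 1) →
          ‖∑ i, star (v i) * ψ i‖ ^ 2 = 1 / 5 := by
  rintro ⟨ψ, -, h⟩
  have unbiased : ∀ A ∈ ({J2x, J2y, J2z} : Set (Matrix (Fin 5) (Fin 5) ℂ)), IsUnbiasedFor A ψ :=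
    fun A hA t v hv hn ↦ by simpa using h A hA t v hv hn
  have hx := unbiased J2x (by simp)
  have hz := J2z_eq_diagonal ▸ unbiased J2z (by simp)
  exact false_of_spin_two_overlap_relations ψ (b := 2 * √(3/2)) (by positivity)
    (fun k ↦ by simpa using hz.norm_sq_apply k)
    (hx.J2x_J2y_kernel_overlaps (unbiased J2y (by simp)))
    hx.J2x_eigen_one_overlaps hx.J2x_eigen_two_overlaps

end
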